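/- arXiv:2410.07382 — 3 statements merged into one kernel-verified Lean document; each statement's English description precedes it below -/
import Mathlib

section
/- In a rooted tree with n nodes, on every path from the root to a leaf, the number of slow edges (edges (parent(u),u) with h₂(u) < h₂(parent(u))) is at most log₂ n. -/
structure RadioTree (V : Type) [Fintype V] [DecidableEq V] where
  root : V
  parent : V → V
  lvl : V → ℕ
  lvl_root : lvl root = 0
  lvl_parent : ∀ v, v ≠ root → lvl v = lvl (parent v) + 1

namespace RadioTree

variable {V : Type} [Fintype V] [DecidableEq V]

/-- The children of `v`: the non-root nodes whose parent is `v`. -/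
def children (T : RadioTree V) (v : V) : Finset V :=
  Finset.univ.filter fun u => u ≠ T.root ∧ T.parent u = v

def IsLeaf (T : RadioTree V) (v : V) : Prop := T.children v = ∅

/-- `h2` is the 2-height function of the rooted tree `T`:
`h2 v = 0` for leaves; otherwise, with `m` the maximum 2-height among the
children of `v`, `h2 v = m` if exactly one child attains `m`, and
`h2 v = m + 1` if at least two children attain `m`. -/
def IsH2 (T : RadioTree V) (h2 : V → ℕ) : Prop :=
  ∀ v,
    (T.children v = ∅ → h2 v = 0) ∧
    (T.children v ≠ ∅ →
      (((T.children v).filter fun u => h2 u = (T.children v).sup h2).card = 1 →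
        h2 v = (T.children v).sup h2) ∧
      (2 ≤ ((T.children v).filter fun u => h2 u = (T.children v).sup h2).card →
        h2 v = (T.children v).sup h2 + 1))

/-- `u` lies in the subtree rooted at `v`. -/
def InSubtree (T : RadioTree V) (v u : V) : Prop :=
  ∃ k, T.parent^[k] u = v ∧ T.lvl u = T.lvl v + k

end RadioTree

/-! Along the path from `ℓ` upwards `h2` never decreases, and it increases exactly at the slow
edges, so there are at most `h2 w` of them, `w` the top of the path. A node of 2-height `h` has at
least `2 ^ h` nodes in its subtree: either a child already has 2-height `h`, or two children have
2-height `h - 1` and their subtrees are disjoint. Hence `h2 w ≤ log₂ n`. -/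

open Finset

theorem card_filter_range_ne_succ_add_le {f : ℕ → ℕ} {n : ℕ} (hf : ∀ k < n, f k ≤ f (k + 1)) :
    #((range n).filter fun k => f k ≠ f (k + 1)) + f 0 ≤ f n := by
  induction n with
  | zero => simp
  | succ n ih =>
    have ih := ih fun k hk => hf k (by omega)
    have hstep := hf n (by omega)
    rw [range_add_one, filter_insert]
    split_ifs
    · rw [card_insert_of_notMem (by simp)]
      omega
    · omega

namespace RadioTree

variable {V : Type} [Fintype V] [DecidableEq V] {T : RadioTree V} {u v : V}

open Classical in
noncomputable def subtree (T : RadioTree V) (v : V) : Finset V :=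
  univ.filter (T.InSubtree v)

lemma mem_subtree : u ∈ T.subtree v ↔ T.InSubtree v u := by
  simp [subtree]

lemma mem_subtree_self (T : RadioTree V) (v : V) : v ∈ T.subtree v :=
  mem_subtree.2 ⟨0, rfl, rfl⟩

lemma lvl_of_mem_children (hu : u ∈ T.children v) : T.lvl u = T.lvl v + 1 := by
  simp only [children, mem_filter] at hu
  rw [T.lvl_parent u hu.2.1, hu.2.2]

lemma subtree_subset_of_mem_children (hu : u ∈ T.children v) : T.subtree u ⊆ T.subtree v := by
  intro w hw
  obtain ⟨k, hk, hlvl⟩ := mem_subtree.1 hw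
  have hparent : T.parent u = v := (mem_filter.1 hu).2.2
  refine mem_subtree.2 ⟨k + 1, ?_, ?_⟩
  · rw [Function.iterate_succ_apply', hk, hparent]
  · rw [hlvl, lvl_of_mem_children hu]; ring

lemma notMem_subtree_of_mem_children (hu : u ∈ T.children v) : v ∉ T.subtree u := by
  intro hv
  obtain ⟨k, -, hlvl⟩ := mem_subtree.1 hv
  rw [lvl_of_mem_children hu] at hlvl
  omega

lemma card_subtree_lt_of_mem_children (hu : u ∈ T.children v) :
    #(T.subtree u) < #(T.subtree v) :=
  card_lt_card ⟨subtree_subset_of_mem_children hu,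
    fun h => notMem_subtree_of_mem_children hu (h (T.mem_subtree_self v))⟩

lemma disjoint_subtree_of_mem_children {u₁ u₂ : V} (h₁ : u₁ ∈ T.children v)
    (h₂ : u₂ ∈ T.children v) (hne : u₁ ≠ u₂) : Disjoint (T.subtree u₁) (T.subtree u₂) := by
  refine disjoint_left.2 fun w hw₁ hw₂ => hne ?_
  obtain ⟨k₁, hk₁, hlvl₁⟩ := mem_subtree.1 hw₁
  obtain ⟨k₂, hk₂, hlvl₂⟩ := mem_subtree.1 hw₂
  have : k₁ = k₂ := by
    rw [lvl_of_mem_children h₁] at hlvl₁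
    rw [lvl_of_mem_children h₂] at hlvl₂
    omega
  rw [← hk₁, this, hk₂]

lemma lvl_iterate_parent (T : RadioTree V) (v : V) {k : ℕ} (hk : k ≤ T.lvl v) :
    T.lvl (T.parent^[k] v) = T.lvl v - k := by
  induction k with
  | zero => simp
  | succ k ih =>
    have ih := ih (by omega)
    have hne : T.parent^[k] v ≠ T.root := fun h => by
      rw [h, T.lvl_root] at ih
      omega
    rw [Function.iterate_succ_apply']
    have := T.lvl_parent _ hne
    omega

lemma iterate_parent_mem_children {k : ℕ} (hk : k < T.lvl v) :
    T.parent^[k] v ∈ T.children (T.parent^[k + 1] v) := by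
  have hlvl := T.lvl_iterate_parent v hk.le
  have hne : T.parent^[k] v ≠ T.root := fun h => by
    rw [h, T.lvl_root] at hlvl
    omega
  simp [children, hne, Function.iterate_succ_apply']

variable {h2 : V → ℕ}

lemma IsH2.exists_child_eq_sup (hh2 : T.IsH2 h2) (hv : (T.children v).Nonempty) :
    ∃ u ∈ T.children v, h2 u = (T.children v).sup h2 ∧
      (h2 v = h2 u ∨ ∃ u' ∈ T.children v, u' ≠ u ∧ h2 u' = h2 u ∧ h2 v = h2 u + 1) := by
  set F := (T.children v).filter fun u => h2 u = (T.children v).sup h2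
  obtain ⟨u, hu, hsup⟩ := exists_mem_eq_sup _ hv h2
  have huF : u ∈ F := mem_filter.2 ⟨hu, hsup.symm⟩
  refine ⟨u, hu, hsup.symm, ?_⟩
  have hrec := (hh2 v).2 hv.ne_empty
  rcases (one_le_card.2 ⟨u, huF⟩).eq_or_lt with hone | htwo
  · exact Or.inl (by rw [hrec.1 hone.symm, hsup])
  · obtain ⟨u', hu'F, hne⟩ := exists_mem_ne htwo u
    obtain ⟨hu', hsup'⟩ := mem_filter.1 hu'F
    exact Or.inr ⟨u', hu', hne, by rw [hsup', hsup], by rw [hrec.2 htwo, hsup]⟩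

lemma IsH2.le_of_mem_children (hh2 : T.IsH2 h2) (hw : u ∈ T.children v) : h2 u ≤ h2 v := by
  obtain ⟨u₀, -, hsup, hcases⟩ := hh2.exists_child_eq_sup ⟨u, hw⟩
  have : h2 u ≤ h2 u₀ := hsup ▸ le_sup hw
  rcases hcases with h | ⟨-, -, -, -, h⟩ <;> omega

lemma IsH2.two_pow_le_card_subtree (hh2 : T.IsH2 h2) (v : V) : 2 ^ h2 v ≤ #(T.subtree v) := by
  induction hn : #(T.subtree v) using Nat.strong_induction_on generalizing v with
  | _ n ih =>
    subst hn
    have ih' : ∀ u ∈ T.children v, 2 ^ h2 u ≤ #(T.subtree u) := fun u hu =>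
      ih _ (card_subtree_lt_of_mem_children hu) u rfl
    rcases (T.children v).eq_empty_or_nonempty with hleaf | hv
    · rw [(hh2 v).1 hleaf, pow_zero]
      exact card_pos.2 ⟨v, T.mem_subtree_self v⟩
    obtain ⟨u, hu, -, heq | ⟨u', hu', hne, heq', heq⟩⟩ := hh2.exists_child_eq_sup hv
    · calc 2 ^ h2 v = 2 ^ h2 u := by rw [heq]
        _ ≤ #(T.subtree u) := ih' u hu
        _ ≤ #(T.subtree v) := card_le_card (subtree_subset_of_mem_children hu)
    · calc 2 ^ h2 v = 2 ^ h2 u + 2 ^ h2 u' := by rw [heq, heq', pow_succ]; ring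
        _ ≤ #(T.subtree u) + #(T.subtree u') := add_le_add (ih' u hu) (ih' u' hu')
        _ = #(T.subtree u ∪ T.subtree u') :=
          (card_union_of_disjoint (disjoint_subtree_of_mem_children hu hu' hne.symm)).symm
        _ ≤ #(T.subtree v) := card_le_card (union_subset
          (subtree_subset_of_mem_children hu) (subtree_subset_of_mem_children hu'))

lemma IsH2.le_logb_card (hh2 : T.IsH2 h2) (v : V) : (h2 v : ℝ) ≤ Real.logb 2 (Fintype.card V) := by
  have hpow : 2 ^ h2 v ≤ Fintype.card V := (hh2.two_pow_le_card_subtree v).trans (card_le_univ _)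
  rw [Real.le_logb_iff_rpow_le one_lt_two (by exact_mod_cast Fintype.card_pos_iff.2 ⟨v⟩),
    Real.rpow_natCast]
  exact_mod_cast hpow

end RadioTree

theorem stmt4_general {V : Type} [Fintype V] [DecidableEq V] (T : RadioTree V)
    (h2 : V → ℕ) (hh2 : T.IsH2 h2) (ℓ : V) :
    ((((Finset.range (T.lvl ℓ)).filter fun k =>
        h2 (T.parent^[k] ℓ) ≠ h2 (T.parent^[k+1] ℓ)).card : ℝ))
      ≤ Real.logb 2 (Fintype.card V) := by
  have hslow := card_filter_range_ne_succ_add_le (f := fun k => h2 (T.parent^[k] ℓ))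
    fun k hk => hh2.le_of_mem_children (RadioTree.iterate_parent_mem_children hk)
  calc _ ≤ (h2 (T.parent^[T.lvl ℓ] ℓ) : ℝ) := by exact_mod_cast (Nat.le_add_right _ _).trans hslow
    _ ≤ Real.logb 2 (Fintype.card V) := hh2.le_logb_card _

/-- on every path from the root to a leaf `ℓ` (given by iterating
the parent map `lvl ℓ` times), the number of slow edges is at most `log₂ n`. -/
theorem stmt4 {V : Type} [Fintype V] [DecidableEq V] (T : RadioTree V)
    (h2 : V → ℕ) (hh2 : T.IsH2 h2) (ℓ : V) (hleaf : T.IsLeaf ℓ) :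
    ((((Finset.range (T.lvl ℓ)).filter fun k =>
        h2 (T.parent^[k] ℓ) ≠ h2 (T.parent^[k+1] ℓ)).card : ℝ))
      ≤ Real.logb 2 (Fintype.card V) :=
  stmt4_general T h2 hh2 ℓ
end

section
/- Any labeling scheme that supports deterministic gathering in every radio network must have length Ω(log Δ): specifically, in the spider graph consisting of a path v₁,…,v_D attached to Δ pendant vertices v_{D+1},…,v_{D+Δ} all adjacent to v_D, with sink v₁, any labeling scheme supporting a correct deterministic gathering algorithm must assign pairwise distinct labels to the Δ pendant vertices v_{D+1},…,v_{D+Δ}, and hence has length at least ⌈log₂ Δ⌉. -/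
/-!
Two pendant vertices `i ≠ j` of the spider have the same unique neighbour `v_D`. If they also
had the same label, they would run the same algorithm on the same received messages, so they
would transmit in exactly the same rounds; every time `i` transmits, its only neighbour hears a
collision. By induction on time, the initial message of `i` is never known to any other vertex,
in particular not to the sink. Distinct labels below `2 ^ len` for `Δ` pendants give
`Δ ≤ 2 ^ len`.
-/

open Classical

noncomputable section

/-- The spider graph on `Fin (D + Δ)`: vertices `0, …, D-1` form a path
(`0` is the sink `v₁`, `D-1` is `v_D`); vertices `D, …, D+Δ-1` are the `Δ`
pendant vertices, all adjacent to `v_D = D-1`. -/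
def spider (D Δ : ℕ) : SimpleGraph (Fin (D + Δ)) :=
  SimpleGraph.fromRel fun i j =>
    (j.val = i.val + 1 ∧ j.val < D) ∨ (i.val = D - 1 ∧ D ≤ j.val)

/-- A deterministic radio algorithm, run identically by every node and
parameterized only by the node's label: given the label and the history of
received messages so far (`none` means silence or collision, `some S` means a
message with content `S`, a finite set of collected initial messages, was
received), it decides whether to transmit in the current round.  A
transmitting node transmits its entire current knowledge. -/
def Algo : Type := ℕ → List (Option (Finset ℕ)) → Bool

/-- Synchronous execution of the radio algorithm `A` on graph `G` with labels
`label` and initial messages `inp`.  `run G label inp A t v` returns the pair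
(history of messages received by `v` in rounds `< t`, knowledge of `v` at
time `t`, i.e. the set of initial messages it has collected).  A listening
node receives a message in a round iff exactly one of its neighbors
transmits in that round (no collision detection). -/
def run {V : Type} [Fintype V] (G : SimpleGraph V)
    (label : V → ℕ) (inp : V → ℕ) (A : Algo) :
    ℕ → V → List (Option (Finset ℕ)) × Finset ℕ
  | 0 => fun v => ([], {inp v})
  | (t + 1) => fun v =>
      let hist : V → List (Option (Finset ℕ)) := fun u => (run G label inp A t u).1
      let know : V → Finset ℕ := fun u => (run G label inp A t u).2
      let act : V → Option (Finset ℕ) := fun u =>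
        if A (label u) (hist u) then some (know u) else none
      let recv : Option (Finset ℕ) :=
        if h : ∃! u : V, G.Adj u v ∧ (act u).isSome then act h.choose else none
      (hist v ++ [recv], know v ∪ recv.getD ∅)

section Radio

variable {V : Type} [Fintype V] (G : SimpleGraph V) (label inp : V → ℕ) (A : Algo)

def sent (t : ℕ) (u : V) : Option (Finset ℕ) :=
  if A (label u) (run G label inp A t u).1 then some (run G label inp A t u).2 else none

def heard (t : ℕ) (v : V) : Option (Finset ℕ) :=
  if h : ∃! u : V, G.Adj u v ∧ (sent G label inp A t u).isSome
    then sent G label inp A t h.choose else none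

theorem run_succ (t : ℕ) (v : V) :
    run G label inp A (t + 1) v =
      ((run G label inp A t v).1 ++ [heard G label inp A t v],
       (run G label inp A t v).2 ∪ (heard G label inp A t v).getD ∅) := rfl

variable {G label inp A}

theorem heard_eq_of_adj_iff {v v' : V} (h : ∀ u, G.Adj u v ↔ G.Adj u v') (t : ℕ) :
    heard G label inp A t v = heard G label inp A t v' := by
  simp only [heard, h]

theorem exists_unique_sender_of_mem_heard {t : ℕ} {v : V} {x : ℕ}
    (hx : x ∈ (heard G label inp A t v).getD ∅) :
    ∃ u, G.Adj u v ∧ (sent G label inp A t u).isSome ∧ x ∈ (run G label inp A t u).2 ∧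
      ∀ u', G.Adj u' v → (sent G label inp A t u').isSome → u' = u := by
  unfold heard at hx
  split_ifs at hx with hex
  · obtain ⟨⟨hadj, hsent⟩, huniq⟩ := hex.choose_spec
    generalize hex.choose = u at hx hadj hsent huniq
    refine ⟨u, hadj, hsent, ?_, fun u' hu' hs' => huniq u' ⟨hu', hs'⟩⟩
    unfold sent at hx hsent
    split_ifs at hx hsent
    · simpa using hx
    · simp at hsent
  · simp at hx

theorem run_fst_eq_of_twins {i j : V} (htwin : ∀ u, G.Adj u i ↔ G.Adj u j) (t : ℕ) :
    (run G label inp A t i).1 = (run G label inp A t j).1 := by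
  induction t with
  | zero => rfl
  | succ t ih => simp only [run_succ, ih, heard_eq_of_adj_iff htwin]

theorem sent_isSome_eq_of_twins {i j : V} (hlab : label i = label j)
    (htwin : ∀ u, G.Adj u i ↔ G.Adj u j) (t : ℕ) :
    (sent G label inp A t i).isSome = (sent G label inp A t j).isSome := by
  simp only [sent, hlab, run_fst_eq_of_twins htwin t]
  split_ifs <;> rfl

/-- Whenever `i` transmits, so does its twin `j`, and every neighbour of `i` hears a collision. -/
theorem inp_notMem_run_of_twins (hinj : Function.Injective inp) {i j : V} (hij : i ≠ j)
    (hlab : label i = label j) (htwin : ∀ u, G.Adj u i ↔ G.Adj u j) (t : ℕ) {v : V}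
    (hv : v ≠ i) : inp i ∉ (run G label inp A t v).2 := by
  induction t generalizing v with
  | zero =>
    simpa [run] using fun h => hv (hinj h).symm
  | succ t ih =>
    rw [run_succ, Finset.mem_union, not_or]
    refine ⟨ih hv, fun hx => ?_⟩
    obtain ⟨u, hadj, hsent, hxu, huniq⟩ := exists_unique_sender_of_mem_heard hx
    obtain rfl : u = i := by_contra fun hu => ih hu hxu
    have hjv : G.Adj j v := ((htwin v).mp hadj.symm).symm
    exact hij (huniq j hjv (sent_isSome_eq_of_twins hlab htwin t ▸ hsent)).symm

end Radio

section Spider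

variable {D Δ : ℕ}

theorem spider_adj_iff_of_pendant (hD : 1 ≤ D) {p : Fin (D + Δ)} (hp : D ≤ p.val)
    (u : Fin (D + Δ)) : (spider D Δ).Adj u p ↔ u.val = D - 1 := by
  simp only [spider, SimpleGraph.fromRel_adj, ne_eq, Fin.ext_iff]
  omega

theorem spider_pendant_eq_of_label_eq (hD : 1 ≤ D) {label inp : Fin (D + Δ) → ℕ}
    (hinj : Function.Injective inp) {A : Algo}
    (hsucc : ∃ T : ℕ, ∀ v : Fin (D + Δ),
      inp v ∈ (run (spider D Δ) label inp A T ⟨0, Nat.lt_add_right Δ hD⟩).2)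
    {i j : Fin (D + Δ)} (hi : D ≤ i.val) (hj : D ≤ j.val) (hlab : label i = label j) :
    i = j := by
  by_contra hij
  obtain ⟨T, hT⟩ := hsucc
  have htwin (u : Fin (D + Δ)) : (spider D Δ).Adj u i ↔ (spider D Δ).Adj u j := by
    rw [spider_adj_iff_of_pendant hD hi, spider_adj_iff_of_pendant hD hj]
  exact inp_notMem_run_of_twins hinj hij hlab htwin T (Fin.ne_of_val_ne (by dsimp only; omega)) (hT i)

end Spider

/-- in the spider graph with sink `v₁` (vertex `0`), any labeling
scheme of length `len` (labels are binary strings of at most `len` bits,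
encoded as numbers `< 2 ^ len`) supporting a correct deterministic gathering
algorithm must assign pairwise distinct labels to the `Δ` pendant vertices;
hence `Δ ≤ 2 ^ len`, i.e. the length is at least `⌈log₂ Δ⌉`. -/
theorem stmt15 (D Δ len : ℕ) (hD : 1 ≤ D)
    (label : Fin (D + Δ) → ℕ) (hlen : ∀ v, label v < 2 ^ len)
    (inp : Fin (D + Δ) → ℕ) (hinj : Function.Injective inp)
    (A : Algo)
    (hsucc : ∃ T : ℕ, ∀ v : Fin (D + Δ),
      inp v ∈ (run (spider D Δ) label inp A T ⟨0, by omega⟩).2) :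
    (∀ i j : Fin (D + Δ), D ≤ i.val → D ≤ j.val → label i = label j → i = j)
      ∧ Δ ≤ 2 ^ len ∧ Nat.clog 2 Δ ≤ len := by
  have hpend (i j : Fin (D + Δ)) (hi : D ≤ i.val) (hj : D ≤ j.val) (hlab : label i = label j) :
      i = j :=
    spider_pendant_eq_of_label_eq hD hinj hsucc hi hj hlab
  have hcard : Δ ≤ 2 ^ len := by
    simpa using Fintype.card_le_of_injective
      (fun k : Fin Δ => (⟨label (Fin.natAdd D k), hlen _⟩ : Fin (2 ^ len)))
      fun a b hab => Fin.natAdd_injective Δ D <|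
        hpend _ _ (by simp) (by simp) (Fin.mk.inj_iff.mp hab)
  exact ⟨hpend, hcard, Nat.clog_le_of_le_pow hcard⟩

end
end

section
/- Let T be a rooted tree with a labeling s : V → {0,…,Δ−1} such that distinct children of the same node receive distinct labels, and let F be the set of non-root nodes v with h₂(v) = h₂(parent(v)) and S the set of non-root nodes with h₂(v) < h₂(parent(v)). Define t(v) = (D − level(v)) + h₂(v)·(Δ+1) for v ∈ F and t(v) = (D − level(v)) + h₂(v)·(Δ+1) + s(v) + 1 for v ∈ S, where D is the height of T. Then for any two distinct children u, u' of the same node, t(u) ≠ t(u'). -/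
lemma aux_at_most_one {V : Type} [Fintype V] [DecidableEq V] (T : RadioTree V)
    (h2 : V → ℕ) (hh2 : T.IsH2 h2) {v u u' : V}
    (hu : u ∈ T.children v) (hu' : u' ∈ T.children v) (hne : u ≠ u')
    (h1 : h2 u = h2 v) (h2' : h2 u' = h2 v) : False := by
  have hnonempty : T.children v ≠ ∅ := by
    intro h; rw [h] at hu; exact absurd hu (Finset.notMem_empty u)
  obtain ⟨hc1, hc2⟩ := (hh2 v).2 hnonempty
  set m := (T.children v).sup h2 with hm
  have hule : h2 u ≤ m := Finset.le_sup hu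
  have hne' : (T.children v).Nonempty := Finset.nonempty_iff_ne_empty.mpr hnonempty
  obtain ⟨w, hw, hwsup⟩ := Finset.exists_mem_eq_sup _ hne' h2
  have hwmem : w ∈ (T.children v).filter fun x => h2 x = m :=
    Finset.mem_filter.mpr ⟨hw, hwsup.symm⟩
  have hcardpos : 1 ≤ ((T.children v).filter fun x => h2 x = m).card :=
    Finset.card_pos.mpr ⟨w, hwmem⟩
  rcases Nat.lt_or_ge ((T.children v).filter fun x => h2 x = m).card 2 with hlt | hge
  · have hcard1 : ((T.children v).filter fun x => h2 x = m).card = 1 := by omega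
    have hv : h2 v = m := hc1 hcard1
    have humem : u ∈ (T.children v).filter fun x => h2 x = m :=
      Finset.mem_filter.mpr ⟨hu, by omega⟩
    have humem' : u' ∈ (T.children v).filter fun x => h2 x = m :=
      Finset.mem_filter.mpr ⟨hu', by omega⟩
    have : 1 < ((T.children v).filter fun x => h2 x = m).card :=
      Finset.one_lt_card.mpr ⟨u, humem, u', humem', hne⟩
    omega
  · have hv : h2 v = m + 1 := hc2 hge
    omega

/-- in the centralized gathering schedule
`t(v) = (D - level v) + h₂ v · (Δ+1)` for fast nodes (`h₂ v = h₂ (p v)`) and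
`t(v) = (D - level v) + h₂ v · (Δ+1) + s v + 1` for slow nodes, where `s`
assigns values in `{0, …, Δ-1}` that are distinct among siblings, any two
distinct children of the same node have distinct values of `t`. -/
theorem stmt16 {V : Type} [Fintype V] [DecidableEq V] (T : RadioTree V)
    (h2 : V → ℕ) (hh2 : T.IsH2 h2) (D Δ : ℕ) (hΔ : 1 ≤ Δ)
    (s : V → ℕ) (hs : ∀ v, s v < Δ)
    (hsib : ∀ v : V, ∀ u ∈ T.children v, ∀ u' ∈ T.children v,
      u ≠ u' → s u ≠ s u')
    (t : V → ℤ)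
    (ht : ∀ v, v ≠ T.root →
      t v = ((D : ℤ) - T.lvl v) + (h2 v : ℤ) * ((Δ : ℤ) + 1) +
        (if h2 v = h2 (T.parent v) then 0 else (s v : ℤ) + 1)) :
    ∀ v : V, ∀ u ∈ T.children v, ∀ u' ∈ T.children v, u ≠ u' → t u ≠ t u' := by
  intro v u hu u' hu' hne hteq
  have hudata := Finset.mem_filter.mp hu
  have hudata' := Finset.mem_filter.mp hu'
  obtain ⟨-, hur, hup⟩ := hudata
  obtain ⟨-, hur', hup'⟩ := hudata'
  have hlvl : T.lvl u = T.lvl u' := by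
    rw [T.lvl_parent u hur, T.lvl_parent u' hur', hup, hup']
  rw [ht u hur, ht u' hur'] at hteq
  rw [hup, hup'] at hteq
  set eu : ℤ := if h2 u = h2 v then 0 else (s u : ℤ) + 1 with heu
  set eu' : ℤ := if h2 u' = h2 v then 0 else (s u' : ℤ) + 1 with heu'
  have heq : (h2 u : ℤ) * ((Δ : ℤ) + 1) + eu = (h2 u' : ℤ) * ((Δ : ℤ) + 1) + eu' := by
    rw [hlvl] at hteq; linarith
  have hbu : 0 ≤ eu ∧ eu ≤ Δ := by
    rw [heu]; split
    · constructor <;> simp [Int.ofNat_nonneg]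
    · have := hs u; constructor <;> [positivity; exact_mod_cast this]
  have hbu' : 0 ≤ eu' ∧ eu' ≤ Δ := by
    rw [heu']; split
    · constructor <;> simp [Int.ofNat_nonneg]
    · have := hs u'; constructor <;> [positivity; exact_mod_cast this]
  have hh2eq : h2 u = h2 u' := by
    rcases lt_trichotomy (h2 u) (h2 u') with h | h | h
    · exfalso
      have : (h2 u : ℤ) + 1 ≤ (h2 u' : ℤ) := by exact_mod_cast h
      nlinarith [hbu.1, hbu.2, hbu'.1, hbu'.2]
    · exact h
    · exfalso
      have : (h2 u' : ℤ) + 1 ≤ (h2 u : ℤ) := by exact_mod_cast h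
      nlinarith [hbu.1, hbu.2, hbu'.1, hbu'.2]
  have heeq : eu = eu' := by
    rw [hh2eq] at heq; linarith
  rw [heu, heu'] at heeq
  by_cases hfu : h2 u = h2 v
  · by_cases hfu' : h2 u' = h2 v
    · exact aux_at_most_one T h2 hh2 hu hu' hne hfu hfu'
    · simp [hfu, hfu'] at heeq
      have := hbu'.1; rw [heu'] at this; simp [hfu'] at this
      have h0 : (0:ℤ) = (s u' : ℤ) + 1 := heeq
      omega
  · by_cases hfu' : h2 u' = h2 v
    · simp [hfu, hfu'] at heeq
      omega
    · simp [hfu, hfu'] at heeq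
      exact hsib v u hu u' hu' hne (by exact_mod_cast heeq)
end
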